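/- For the worm measure π on W = C_0 ∪ C_2 defined by π(A) ∝ n·x^{|A|} for A ∈ C_0 and 2·x^{|A|} for A ∈ C_2, one has (2/n)·(mx/(mx+1)) ≤ π(C_2)/π(C_0) ≤ n − 1, where n = |V| ≥ 2, m = |E|, x ∈ (0,1). -/
import Mathlib
set_option maxHeartbeats 1000000

open Finset
open scoped symmDiff

section Helpers
variable {α : Type*} [DecidableEq α]

lemma card_symmDiff_add (s t : Finset α) :
    (s ∆ t).card + 2 * (s ∩ t).card = s.card + t.card := by
  have h : s ∆ t = (s \ t) ∪ (t \ s) := symmDiff_def s t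
  have h1 := Finset.card_sdiff_add_card_inter s t
  have h2 := Finset.card_sdiff_add_card_inter t s
  rw [Finset.inter_comm t s] at h2
  rw [h, Finset.card_union_of_disjoint disjoint_sdiff_sdiff]
  omega

lemma neg_one_pow_symmDiff (s t : Finset α) :
    ((-1 : ℝ)) ^ (s ∆ t).card = (-1) ^ s.card * (-1) ^ t.card := by
  have h := card_symmDiff_add s t
  have h2 : ((-1 : ℝ)) ^ ((s ∆ t).card + 2 * (s ∩ t).card) = (-1) ^ (s.card + t.card) := by
    rw [h]
  rwa [pow_add, pow_add, pow_mul, neg_one_sq, one_pow, mul_one] at h2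

lemma inter_symmDiff' (S a b : Finset α) : S ∩ (a ∆ b) = (S ∩ a) ∆ (S ∩ b) :=
  inf_symmDiff_distrib_left S a b

lemma char_sum_nonneg (𝒞 : Finset (Finset α))
    (hc : ∀ A ∈ 𝒞, ∀ B ∈ 𝒞, A ∆ B ∈ 𝒞) (S : Finset α) :
    0 ≤ ∑ A ∈ 𝒞, (-1 : ℝ) ^ (S ∩ A).card := by
  by_cases h : ∀ A ∈ 𝒞, Even (S ∩ A).card
  · apply Finset.sum_nonneg
    intro A hA
    rw [(h A hA).neg_one_pow]
    norm_num
  · push_neg at h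
    obtain ⟨B, hB, hodd⟩ := h
    have hOdd : Odd (S ∩ B).card := Nat.not_even_iff_odd.mp hodd
    have key : ∑ A ∈ 𝒞, (-1 : ℝ) ^ (S ∩ A).card = 0 := by
      refine Finset.sum_involution (fun A _ => A ∆ B) ?_ ?_ ?_ ?_
      · intro A hA
        rw [inter_symmDiff', neg_one_pow_symmDiff, hOdd.neg_one_pow]
        ring
      · intro A hA hne
        intro hcontra
        have : B = ∅ := by
          have := congrArg (A ∆ ·) hcontra
          simpa [← symmDiff_assoc] using this
        rw [this] at hOdd
        simp at hOdd
      · intro A hA; exact hc A hA B hB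
      · intro A hA; simp [symmDiff_assoc]
    rw [key]

lemma pow_card_expansion (E : Finset α) (x : ℝ) (A : Finset α) (hA : A ⊆ E) :
    x ^ A.card = ∑ S ∈ E.powerset,
      ((1 - x) / 2) ^ S.card * ((1 + x) / 2) ^ (E.card - S.card) * (-1 : ℝ) ^ (S ∩ A).card := by
  have step1 : x ^ A.card = ∏ e ∈ E, (if e ∈ A then x else 1) := by
    rw [Finset.prod_ite_mem, Finset.prod_const, Finset.inter_eq_right.mpr hA]
  have step2 : ∀ e ∈ E,
      (if e ∈ A then x else (1:ℝ)) =
        ((1 - x) / 2 * (-1 : ℝ) ^ (if e ∈ A then 1 else 0) + (1 + x) / 2) := by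
    intro e _
    by_cases h : e ∈ A <;> simp [h] <;> ring
  rw [step1, Finset.prod_congr rfl step2, Finset.prod_add]
  refine Finset.sum_congr rfl ?_
  intro S hS
  rw [Finset.mem_powerset] at hS
  rw [Finset.prod_mul_distrib, Finset.prod_const, Finset.prod_const,
    Finset.card_sdiff_of_subset hS, Finset.prod_pow_eq_pow_sum]
  have hcnt : (∑ i ∈ S, if i ∈ A then 1 else 0) = (S ∩ A).card := by
    rw [← Finset.filter_mem_eq_inter, Finset.card_filter]
  rw [hcnt]; ring


lemma neg_one_pow_le_one' (k : ℕ) : ((-1 : ℝ)) ^ k ≤ 1 := by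
  rcases Nat.even_or_odd k with h | h
  · rw [h.neg_one_pow]
  · rw [h.neg_one_pow]; norm_num

lemma coset_le (E : Finset α) {x : ℝ} (hx0 : 0 ≤ x) (hx1 : x ≤ 1)
    (𝒞 : Finset (Finset α)) (hsub : ∀ A ∈ 𝒞, A ⊆ E)
    (hc : ∀ A ∈ 𝒞, ∀ B ∈ 𝒞, A ∆ B ∈ 𝒞) (γ : Finset α) (hγ : γ ⊆ E) :
    ∑ A ∈ 𝒞, x ^ (γ ∆ A).card ≤ ∑ A ∈ 𝒞, x ^ A.card := by
  set w : Finset α → ℝ := fun S => ((1 - x) / 2) ^ S.card * ((1 + x) / 2) ^ (E.card - S.card)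
    with hw
  have hwpos : ∀ S : Finset α, 0 ≤ w S := by
    intro S
    apply mul_nonneg <;> apply pow_nonneg <;> linarith
  calc ∑ A ∈ 𝒞, x ^ (γ ∆ A).card
      = ∑ A ∈ 𝒞, ∑ S ∈ E.powerset, w S * (-1 : ℝ) ^ (S ∩ (γ ∆ A)).card := by
        refine Finset.sum_congr rfl fun A hA => ?_
        refine pow_card_expansion E x _ ?_
        calc γ ∆ A ⊆ γ ∪ A := symmDiff_le_sup
        _ ⊆ E := Finset.union_subset hγ (hsub A hA)
    _ = ∑ S ∈ E.powerset, w S * ((-1 : ℝ) ^ (S ∩ γ).card *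
          ∑ A ∈ 𝒞, (-1 : ℝ) ^ (S ∩ A).card) := by
        rw [Finset.sum_comm]
        refine Finset.sum_congr rfl fun S hS => ?_
        rw [Finset.mul_sum, Finset.mul_sum]
        refine Finset.sum_congr rfl fun A hA => ?_
        rw [inter_symmDiff', neg_one_pow_symmDiff]
    _ ≤ ∑ S ∈ E.powerset, w S * (1 * ∑ A ∈ 𝒞, (-1 : ℝ) ^ (S ∩ A).card) := by
        refine Finset.sum_le_sum fun S hS => ?_
        refine mul_le_mul_of_nonneg_left ?_ (hwpos S)
        exact mul_le_mul_of_nonneg_right (neg_one_pow_le_one' _)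
          (char_sum_nonneg 𝒞 hc S)
    _ = ∑ A ∈ 𝒞, x ^ A.card := by
        simp_rw [one_mul, Finset.mul_sum]
        rw [Finset.sum_comm]
        exact (Finset.sum_congr rfl fun A hA =>
          (pow_card_expansion E x A (hsub A hA)).symm)
end Helpers

/-- The set of odd-degree vertices of the spanning subgraph `(V, A)`. -/
def oddVerts {V : Type*} [Fintype V] [DecidableEq V] (A : Finset (Sym2 V)) : Finset V :=
  Finset.univ.filter fun v => Odd (A.filter fun e => v ∈ e).card

/-- `C_k`: the edge sets `A ⊆ E` with exactly `k` odd-degree vertices. -/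
def Ck {V : Type*} [Fintype V] [DecidableEq V]
    (G : SimpleGraph V) [DecidableRel G.Adj] (k : ℕ) : Finset (Finset (Sym2 V)) :=
  G.edgeFinset.powerset.filter fun A => (oddVerts A).card = k

/-- `λ(S) = Σ_{A ∈ S} x^{|A|}` for a set `S` of configurations. -/
noncomputable def lamSet {V : Type*} [DecidableEq V]
    (x : ℝ) (S : Finset (Finset (Sym2 V))) : ℝ :=
  ∑ A ∈ S, x ^ A.card

section Graph
variable {V : Type*} [Fintype V] [DecidableEq V]

lemma mem_Ck {G : SimpleGraph V} [DecidableRel G.Adj] {k : ℕ} {A : Finset (Sym2 V)} :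
    A ∈ Ck G k ↔ A ⊆ G.edgeFinset ∧ (oddVerts A).card = k := by
  simp [Ck]

lemma oddVerts_symmDiff (A B : Finset (Sym2 V)) :
    oddVerts (A ∆ B) = oddVerts A ∆ oddVerts B := by
  ext v
  simp only [oddVerts, Finset.mem_filter, Finset.mem_univ, true_and, Finset.mem_symmDiff]
  have hf : (A ∆ B).filter (fun e => v ∈ e)
      = (A.filter fun e => v ∈ e) ∆ (B.filter fun e => v ∈ e) := by
    ext e
    simp only [Finset.mem_filter, Finset.mem_symmDiff]
    tauto
  rw [hf]
  have h := card_symmDiff_add (A.filter fun e => v ∈ e) (B.filter fun e => v ∈ e)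
  simp only [Nat.odd_iff]
  omega

lemma oddVerts_singleton (e : Sym2 V) :
    oddVerts ({e} : Finset (Sym2 V)) = Finset.univ.filter (· ∈ e) := by
  ext v
  simp only [oddVerts, Finset.mem_filter, Finset.mem_univ, true_and]
  by_cases h : v ∈ e <;> simp [Finset.filter_singleton, h]

lemma oddVerts_singleton_card {e : Sym2 V} (he : ¬e.IsDiag) :
    (oddVerts ({e} : Finset (Sym2 V))).card = 2 := by
  induction e using Sym2.ind with
  | _ a b =>
    have hne : a ≠ b := by simpa using he
    have : oddVerts ({s(a, b)} : Finset (Sym2 V)) = {a, b} := by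
      rw [oddVerts_singleton]
      ext v
      simp [Sym2.mem_iff]
    rw [this, Finset.card_pair hne]

lemma oddVerts_singleton_inj {e f : Sym2 V} (he : ¬e.IsDiag)
    (h : oddVerts ({e} : Finset (Sym2 V)) = oddVerts ({f} : Finset (Sym2 V))) : e = f := by
  have hm : ∀ v, v ∈ e ↔ v ∈ f := by
    intro v
    have h1 : v ∈ Finset.univ.filter (· ∈ e) ↔ v ∈ Finset.univ.filter (· ∈ f) := by
      rw [← oddVerts_singleton, ← oddVerts_singleton, h]
    simpa using h1
  induction e using Sym2.ind with
  | _ a b =>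
    have hne : a ≠ b := by simpa using he
    have ha : a ∈ f := (hm a).mp (by simp)
    have hb : b ∈ f := (hm b).mp (by simp)
    exact ((Sym2.mem_and_mem_iff hne).mp ⟨ha, hb⟩).symm

lemma oddVerts_eq_empty {G : SimpleGraph V} [DecidableRel G.Adj] {A : Finset (Sym2 V)}
    (hA : A ∈ Ck G 0) : oddVerts A = ∅ :=
  Finset.card_eq_zero.mp (mem_Ck.mp hA).2

lemma symmDiff_subset_edgeFinset {G : SimpleGraph V} [DecidableRel G.Adj]
    {A B : Finset (Sym2 V)} (hA : A ⊆ G.edgeFinset) (hB : B ⊆ G.edgeFinset) :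
    A ∆ B ⊆ G.edgeFinset :=
  le_trans symmDiff_le_sup (Finset.union_subset hA hB)

lemma toggle_mem_C2 {G : SimpleGraph V} [DecidableRel G.Adj] {A : Finset (Sym2 V)}
    (hA : A ∈ Ck G 0) {e : Sym2 V} (he : e ∈ G.edgeFinset) :
    A ∆ {e} ∈ Ck G 2 := by
  rw [mem_Ck]
  refine ⟨symmDiff_subset_edgeFinset (mem_Ck.mp hA).1 (by simpa using he), ?_⟩
  rw [oddVerts_symmDiff, oddVerts_eq_empty hA]
  rw [show (∅ : Finset V) ∆ oddVerts {e} = oddVerts {e} from bot_symmDiff _]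
  exact oddVerts_singleton_card (G.not_isDiag_of_mem_edgeFinset he)

lemma lamSet_nonneg {x : ℝ} (hx : 0 ≤ x) (S : Finset (Finset (Sym2 V))) :
    0 ≤ lamSet x S :=
  Finset.sum_nonneg fun A _ => pow_nonneg hx _

lemma one_le_lamSet_C0 {G : SimpleGraph V} [DecidableRel G.Adj] {x : ℝ} (hx : 0 ≤ x) :
    1 ≤ lamSet x (Ck G 0) := by
  have hmem : (∅ : Finset (Sym2 V)) ∈ Ck G 0 := by
    rw [mem_Ck]
    constructor
    · simp
    · simp [oddVerts, Nat.odd_iff]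
  calc (1 : ℝ) = x ^ (∅ : Finset (Sym2 V)).card := by simp
    _ ≤ lamSet x (Ck G 0) :=
        Finset.single_le_sum (fun A _ => pow_nonneg hx _) hmem

lemma lower_core (G : SimpleGraph V) [DecidableRel G.Adj] {x : ℝ}
    (hx0 : 0 < x) (hx1 : x ≤ 1) :
    (G.edgeFinset.card : ℝ) * x * lamSet x (Ck G 0) ≤ lamSet x (Ck G 2) := by
  have h1 : (G.edgeFinset.card : ℝ) * x * lamSet x (Ck G 0)
      = ∑ p ∈ (Ck G 0) ×ˢ G.edgeFinset, x ^ (p.1.card + 1) := by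
    rw [Finset.sum_product, lamSet, Finset.mul_sum]
    refine Finset.sum_congr rfl fun A _ => ?_
    rw [show (∑ y ∈ G.edgeFinset, x ^ ((A, y).1.card + 1))
        = ∑ _y ∈ G.edgeFinset, x ^ (A.card + 1) from rfl,
      Finset.sum_const, nsmul_eq_mul, pow_succ]
    ring
  rw [h1]
  have h2 : ∑ p ∈ (Ck G 0) ×ˢ G.edgeFinset, x ^ (p.1.card + 1)
      ≤ ∑ p ∈ (Ck G 0) ×ˢ G.edgeFinset, x ^ ((p.1 ∆ ({p.2} : Finset (Sym2 V))).card) := by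
    refine Finset.sum_le_sum fun p hp => ?_
    apply pow_le_pow_of_le_one (le_of_lt hx0) hx1
    calc (p.1 ∆ ({p.2} : Finset (Sym2 V))).card
        ≤ (p.1 ∪ {p.2}).card := Finset.card_le_card symmDiff_le_sup
      _ ≤ p.1.card + 1 := by
          refine le_trans (Finset.card_union_le _ _) ?_
          simp
  refine le_trans h2 ?_
  have hinj : ∀ p ∈ (Ck G 0) ×ˢ G.edgeFinset, ∀ q ∈ (Ck G 0) ×ˢ G.edgeFinset,
      p.1 ∆ ({p.2} : Finset (Sym2 V)) = q.1 ∆ ({q.2} : Finset (Sym2 V)) → p = q := by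
    rintro ⟨A, e⟩ hp ⟨B, f⟩ hq hpq
    rw [Finset.mem_product] at hp hq
    have hodd : oddVerts ({e} : Finset (Sym2 V)) = oddVerts ({f} : Finset (Sym2 V)) := by
      have := congrArg oddVerts hpq
      have hbot : ∀ s : Finset V, ∅ ∆ s = s := fun s => bot_symmDiff s
      rwa [oddVerts_symmDiff, oddVerts_symmDiff, oddVerts_eq_empty hp.1,
        oddVerts_eq_empty hq.1, hbot, hbot] at this
    have hef : e = f :=
      oddVerts_singleton_inj (G.not_isDiag_of_mem_edgeFinset hp.2) hodd
    subst hef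
    have hAB : A = B := by
      have := congrArg (· ∆ ({e} : Finset (Sym2 V))) hpq
      simpa [symmDiff_assoc] using this
    simp [hAB]
  calc ∑ p ∈ (Ck G 0) ×ˢ G.edgeFinset, x ^ ((p.1 ∆ ({p.2} : Finset (Sym2 V))).card)
      = ∑ B ∈ ((Ck G 0) ×ˢ G.edgeFinset).image
          (fun p => p.1 ∆ ({p.2} : Finset (Sym2 V))), x ^ B.card :=
        (Finset.sum_image (f := fun B => x ^ B.card) hinj).symm
    _ ≤ lamSet x (Ck G 2) := by
        refine Finset.sum_le_sum_of_subset_of_nonneg ?_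
          (fun B _ _ => pow_nonneg (le_of_lt hx0) _)
        intro B hB
        obtain ⟨p, hp, rfl⟩ := Finset.mem_image.mp hB
        rw [Finset.mem_product] at hp
        exact toggle_mem_C2 hp.1 hp.2

lemma upper_core (G : SimpleGraph V) [DecidableRel G.Adj] {x : ℝ}
    (hx0 : 0 ≤ x) (hx1 : x ≤ 1) :
    lamSet x (Ck G 2) ≤ ((Fintype.card V).choose 2 : ℝ) * lamSet x (Ck G 0) := by
  have C0sub : ∀ A ∈ Ck G 0, A ⊆ G.edgeFinset := fun A hA => (mem_Ck.mp hA).1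
  have C0closed : ∀ A ∈ Ck G 0, ∀ B ∈ Ck G 0, A ∆ B ∈ Ck G 0 := by
    intro A hA B hB
    rw [mem_Ck]
    refine ⟨symmDiff_subset_edgeFinset (C0sub A hA) (C0sub B hB), ?_⟩
    rw [oddVerts_symmDiff, oddVerts_eq_empty hA, oddVerts_eq_empty hB]
    simp
  have hdecomp : lamSet x (Ck G 2)
      = ∑ p ∈ (Ck G 2).image oddVerts,
          ∑ A ∈ (Ck G 2).filter (fun A => oddVerts A = p), x ^ A.card :=
    (Finset.sum_fiberwise_of_maps_to (fun A hA => Finset.mem_image_of_mem _ hA) _).symm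
  have hfiber : ∀ p ∈ (Ck G 2).image oddVerts,
      ∑ A ∈ (Ck G 2).filter (fun A => oddVerts A = p), x ^ A.card
        ≤ lamSet x (Ck G 0) := by
    intro p hp
    obtain ⟨γ, hγ2, hγp⟩ := Finset.mem_image.mp hp
    have hγE : γ ⊆ G.edgeFinset := (mem_Ck.mp hγ2).1
    have key : ∀ A ∈ (Ck G 2).filter (fun A => oddVerts A = p), γ ∆ A ∈ Ck G 0 := by
      intro A hA
      rw [Finset.mem_filter] at hA
      rw [mem_Ck]
      refine ⟨symmDiff_subset_edgeFinset hγE (mem_Ck.mp hA.1).1, ?_⟩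
      rw [oddVerts_symmDiff, hγp, hA.2]
      simp
    have hinj : ∀ A ∈ (Ck G 2).filter (fun A => oddVerts A = p),
        ∀ B ∈ (Ck G 2).filter (fun A => oddVerts A = p), γ ∆ A = γ ∆ B → A = B := by
      intro A _ B _ h
      have := congrArg (γ ∆ ·) h
      simpa [symmDiff_symmDiff_cancel_left] using this
    calc ∑ A ∈ (Ck G 2).filter (fun A => oddVerts A = p), x ^ A.card
        = ∑ A ∈ (Ck G 2).filter (fun A => oddVerts A = p),
            x ^ ((γ ∆ (γ ∆ A)).card) := by
          refine Finset.sum_congr rfl fun A _ => ?_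
          rw [symmDiff_symmDiff_cancel_left]
      _ = ∑ c ∈ ((Ck G 2).filter (fun A => oddVerts A = p)).image (fun A => γ ∆ A),
            x ^ ((γ ∆ c).card) :=
            (Finset.sum_image (f := fun c => x ^ ((γ ∆ c).card)) hinj).symm
      _ ≤ ∑ c ∈ Ck G 0, x ^ ((γ ∆ c).card) := by
          refine Finset.sum_le_sum_of_subset_of_nonneg ?_
            (fun B _ _ => pow_nonneg hx0 _)
          intro c hc
          obtain ⟨A, hA, rfl⟩ := Finset.mem_image.mp hc
          exact key A hA
      _ ≤ lamSet x (Ck G 0) :=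
          coset_le G.edgeFinset hx0 hx1 (Ck G 0) C0sub C0closed γ hγE
  have hcard : ((Ck G 2).image oddVerts).card ≤ (Fintype.card V).choose 2 := by
    have hsub : (Ck G 2).image oddVerts ⊆ Finset.univ.powersetCard 2 := by
      intro p hp
      obtain ⟨A, hA, rfl⟩ := Finset.mem_image.mp hp
      rw [Finset.mem_powersetCard]
      exact ⟨Finset.subset_univ _, (mem_Ck.mp hA).2⟩
    calc ((Ck G 2).image oddVerts).card ≤ (Finset.univ.powersetCard 2).card :=
          Finset.card_le_card hsub
      _ = (Fintype.card V).choose 2 := by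
          rw [Finset.card_powersetCard, Finset.card_univ]
  calc lamSet x (Ck G 2)
      = ∑ p ∈ (Ck G 2).image oddVerts,
          ∑ A ∈ (Ck G 2).filter (fun A => oddVerts A = p), x ^ A.card := hdecomp
    _ ≤ ∑ p ∈ (Ck G 2).image oddVerts, lamSet x (Ck G 0) :=
        Finset.sum_le_sum hfiber
    _ = (((Ck G 2).image oddVerts).card : ℝ) * lamSet x (Ck G 0) := by
        rw [Finset.sum_const, nsmul_eq_mul]
    _ ≤ ((Fintype.card V).choose 2 : ℝ) * lamSet x (Ck G 0) := by
        have h0 := lamSet_nonneg hx0 (Ck G 0)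
        have hc : (((Ck G 2).image oddVerts).card : ℝ)
            ≤ ((Fintype.card V).choose 2 : ℝ) := by exact_mod_cast hcard
        exact mul_le_mul_of_nonneg_right hc h0

end Graph

/-- Bounds on the ratio `π(C_2)/π(C_0)` for the worm measure
`π(A) ∝ n x^{|A|}` on `C_0`, `2 x^{|A|}` on `C_2`. -/
theorem worm_ratio_bounds {V : Type*} [Fintype V] [DecidableEq V]
    (G : SimpleGraph V) [DecidableRel G.Adj] (hG : G.Connected)
    (hn : 2 ≤ Fintype.card V) {x : ℝ} (hx : x ∈ Set.Ioo (0 : ℝ) 1) :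
    let n : ℝ := Fintype.card V
    let m : ℝ := G.edgeFinset.card
    let Z : ℝ := n * lamSet x (Ck G 0) + 2 * lamSet x (Ck G 2)
    let pi0 : ℝ := n * lamSet x (Ck G 0) / Z
    let pi2 : ℝ := 2 * lamSet x (Ck G 2) / Z
    (2 / n) * (m * x / (m * x + 1)) ≤ pi2 / pi0 ∧ pi2 / pi0 ≤ n - 1 := by
  obtain ⟨hx0, hx1⟩ := hx
  intro n m Z pi0 pi2
  have hmeq : m = (G.edgeFinset.card : ℝ) := rfl
  have hneq : n = (Fintype.card V : ℝ) := rfl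
  have hnR : (2 : ℝ) ≤ n := by rw [hneq]; exact_mod_cast hn
  set L0 := lamSet x (Ck G 0) with hL0def
  set L2 := lamSet x (Ck G 2) with hL2def
  have hL0 : 1 ≤ L0 := one_le_lamSet_C0 (le_of_lt hx0)
  have hL2 : 0 ≤ L2 := lamSet_nonneg (le_of_lt hx0) _
  have hm0 : 0 ≤ m := by rw [hmeq]; positivity
  have hmx : 0 ≤ m * x := mul_nonneg hm0 (le_of_lt hx0)
  have hZ : 0 < Z := by
    have : Z = n * L0 + 2 * L2 := rfl
    rw [this]; nlinarith
  have hratio : pi2 / pi0 = 2 * L2 / (n * L0) := by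
    have h2 : pi2 = 2 * L2 / Z := rfl
    have h0 : pi0 = n * L0 / Z := rfl
    rw [h2, h0, div_div_div_cancel_right₀ (ne_of_gt hZ)]
  rw [hratio]
  have hnL0 : 0 < n * L0 := by nlinarith
  constructor
  · have hlow := lower_core G hx0 (le_of_lt hx1)
    rw [← hmeq, ← hL0def, ← hL2def] at hlow
    have h1 : m * x / (m * x + 1) ≤ m * x := div_le_self hmx (by linarith)
    have h2 : (2 / n) * (m * x) ≤ 2 * L2 / (n * L0) := by
      rw [div_mul_eq_mul_div, div_le_div_iff₀ (by linarith) hnL0]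
      have := mul_le_mul_of_nonneg_left hlow (by linarith : (0:ℝ) ≤ 2 * n)
      nlinarith
    calc (2 / n) * (m * x / (m * x + 1)) ≤ (2 / n) * (m * x) := by
          apply mul_le_mul_of_nonneg_left h1
          positivity
      _ ≤ 2 * L2 / (n * L0) := h2
  · have hup := upper_core G (le_of_lt hx0) (le_of_lt hx1)
    rw [← hL0def, ← hL2def] at hup
    have hchoose : 2 * (((Fintype.card V).choose 2 : ℕ) : ℝ) ≤ n * (n - 1) := by
      have hnat : 2 * (Fintype.card V).choose 2
          ≤ Fintype.card V * (Fintype.card V - 1) := by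
        rw [Nat.choose_two_right]
        have := Nat.div_mul_le_self (Fintype.card V * (Fintype.card V - 1)) 2
        omega
      have h1 : (1 : ℕ) ≤ Fintype.card V := by omega
      calc (2 : ℝ) * (((Fintype.card V).choose 2 : ℕ) : ℝ)
          = ((2 * (Fintype.card V).choose 2 : ℕ) : ℝ) := by push_cast; ring
        _ ≤ ((Fintype.card V * (Fintype.card V - 1) : ℕ) : ℝ) := by exact_mod_cast hnat
        _ = n * (n - 1) := by rw [hneq]; push_cast [Nat.cast_sub h1]; ring
    rw [div_le_iff₀ hnL0]
    have := mul_le_mul_of_nonneg_right hchoose (by linarith : (0:ℝ) ≤ L0)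
    nlinarith
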